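/- arXiv:2404.03859 — 4 statements merged into one kernel-verified Lean document; each statement's English description precedes it below -/
import Mathlib

section
/- Let D be a domain in ℝⁿ, n ≥ 2, and let x₀ ∈ ∂D. Let E ⊂ D be relatively closed in D and nowhere dense in D, and assume D is finitely connected on E. Assume there is an integer m ≥ 1 such that for every neighborhood U of x₀ there is a neighborhood V ⊂ U of x₀ with: (a) V ∩ D connected, and (b) (V ∩ D) \ E having at most m connected components. Let (x_k) and (y_k) be sequences in D \ E converging to x₀. Then there exist a strictly increasing sequence of indices (k_l) and open neighborhoods V_l of x₀ with V_l ⊂ B(x₀, 2^{−l}), l = 1, 2, …, such that for each l one has x_{k_l}, y_{k_l} ∈ V_l ∩ D and there is a path γ_l : [0,1] → V_l ∩ D with γ_l(0) = x_{k_l}, γ_l(1) = y_{k_l}, whose image meets E in at most m − 1 points. -/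
/-!
Fix a small ball `U` about `x₀` and a neighbourhood `V ⊆ U` of `x₀` for which `(V ∩ D) \ E` has at
most `m` components; then at most `m` components of `(D \ E) ∩ U` reach into `V`. Call two of them
adjacent when their closures meet at a point of `E ∩ U`. For large `k`, the points `x k`, `y k` lie
in some `V' ⊆ V` with `V' ∩ D` connected, and since `E` is nowhere dense, `V' ∩ D` cannot be split
between two families of components with no adjacency across; so the components of `x k` and `y k`
are joined by a chain of at most `m - 1` adjacencies. Finite connectivity of `D \ E` at a point
`z ∈ E` makes `z` accessible by a path from every component whose closure contains it (an infinite
concatenation of paths inside a nested sequence of components near `z`), so each adjacency is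
crossed by a path passing through a single point of `E`.
-/

open Set Filter Topology Metric

namespace Path

variable {X : Type*} [TopologicalSpace X]

/-- `σ 0 ⬝ (σ 1 ⬝ (⋯ ⬝ σ (T - 1)))`; the path `σ t` is run on `[1 - 2⁻¹ ^ t, 1 - 2⁻¹ ^ (t + 1)]`. -/
noncomputable def concatSeq :
    (T : ℕ) → (c : ℕ → X) → (∀ t, Path (c t) (c (t + 1))) → Path (c 0) (c T)
  | 0, c, _ => Path.refl (c 0)
  | T + 1, c, σ => (σ 0).trans (concatSeq T (fun t => c (t + 1)) fun t => σ (t + 1))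

theorem concatSeq_succ (T : ℕ) (c : ℕ → X) (σ : ∀ t, Path (c t) (c (t + 1))) :
    concatSeq (T + 1) c σ = (σ 0).trans (concatSeq T (fun t => c (t + 1)) fun t => σ (t + 1)) :=
  rfl

theorem range_concatSeq_subset (T : ℕ) (c : ℕ → X) (σ : ∀ t, Path (c t) (c (t + 1))) :
    range (concatSeq T c σ) ⊆ ⋃ t, range (σ t) := by
  induction T generalizing c with
  | zero =>
    rintro _ ⟨s, rfl⟩
    exact mem_iUnion.2 ⟨0, (σ 0).source_mem_range⟩
  | succ T ih =>
    rw [concatSeq_succ, trans_range]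
    refine union_subset (subset_iUnion (fun t => range (σ t)) 0) ((ih _ _).trans ?_)
    exact iUnion_subset fun t => subset_iUnion (fun t => range (σ t)) (t + 1)

theorem concatSeq_succ_extend {T : ℕ} (c : ℕ → X) (σ : ∀ t, Path (c t) (c (t + 1))) {s : ℝ}
    (hs : s ≤ 1 - 2⁻¹ ^ T) : (concatSeq (T + 1) c σ).extend s = (concatSeq T c σ).extend s := by
  induction T generalizing c s with
  | zero =>
    rw [extend_of_le_zero _ (by simpa using hs), extend_of_le_zero _ (by simpa using hs)]
  | succ T ih =>
    rw [concatSeq_succ (T + 1) c σ, concatSeq_succ T c σ]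
    rcases le_total s (1 / 2) with h | h
    · rw [extend_trans_of_le_half _ _ h, extend_trans_of_le_half _ _ h]
    · rw [extend_trans_of_half_le _ _ h, extend_trans_of_half_le _ _ h]
      exact ih _ _ (s := 2 * s - 1) (by rw [pow_succ] at hs; linarith)

theorem concatSeq_extend_of_le {T T' : ℕ} (hT : T ≤ T') (c : ℕ → X)
    (σ : ∀ t, Path (c t) (c (t + 1))) {s : ℝ} (hs : s ≤ 1 - 2⁻¹ ^ T) :
    (concatSeq T' c σ).extend s = (concatSeq T c σ).extend s := by
  induction T', hT using Nat.le_induction with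
  | base => rfl
  | succ T' hT ih =>
    rw [concatSeq_succ_extend c σ (hs.trans ?_), ih]
    gcongr 1 - ?_
    exact pow_le_pow_of_le_one (by norm_num) (by norm_num) hT

theorem exists_mem_range_of_concatSeq_extend {T T' : ℕ} (hT : T ≤ T') (c : ℕ → X)
    (σ : ∀ t, Path (c t) (c (t + 1))) {s : ℝ} (hs : 1 - 2⁻¹ ^ T < s) :
    ∃ t ≥ T, (concatSeq T' c σ).extend s ∈ range (σ t) := by
  induction T generalizing T' c s with
  | zero =>
    simpa using range_concatSeq_subset T' c σ ((concatSeq T' c σ).extend_range ▸ mem_range_self s)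
  | succ T ih =>
    obtain ⟨T', rfl⟩ : ∃ T'', T' = T'' + 1 := ⟨T' - 1, by omega⟩
    have h : 1 / 2 ≤ s := by
      have : (2⁻¹ : ℝ) ^ (T + 1) ≤ 2⁻¹ := pow_le_of_le_one (by norm_num) (by norm_num) (by omega)
      linarith
    rw [concatSeq_succ, extend_trans_of_half_le _ _ h]
    obtain ⟨t, ht, hmem⟩ := ih (T' := T') (by omega) (fun t => c (t + 1)) (fun t => σ (t + 1))
      (s := 2 * s - 1) (by rw [pow_succ] at hs; linarith)
    exact ⟨t + 1, by omega, hmem⟩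

/-- The pointwise limit of `concatSeq T c σ` as `T → ∞`, with value `z` at `1`. -/
noncomputable def concatSeqLimit (c : ℕ → X) (σ : ∀ t, Path (c t) (c (t + 1))) (z : X)
    (s : unitInterval) : X :=
  open scoped Classical in
  if h : ∃ T : ℕ, (s : ℝ) ≤ 1 - 2⁻¹ ^ T then (concatSeq (Nat.find h) c σ).extend s else z

variable {c : ℕ → X} {σ : ∀ t, Path (c t) (c (t + 1))} {z : X}

theorem concatSeqLimit_eq {s : unitInterval} {T : ℕ} (hs : (s : ℝ) ≤ 1 - 2⁻¹ ^ T) :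
    concatSeqLimit c σ z s = (concatSeq T c σ).extend s := by
  classical
  have h : ∃ T : ℕ, (s : ℝ) ≤ 1 - 2⁻¹ ^ T := ⟨T, hs⟩
  rw [concatSeqLimit, dif_pos h]
  exact (concatSeq_extend_of_le (Nat.find_min' h hs) c σ (Nat.find_spec h)).symm

theorem concatSeqLimit_one : concatSeqLimit c σ z 1 = z :=
  dif_neg fun ⟨T, hT⟩ => by
    have := pow_pos (by norm_num : (0 : ℝ) < 2⁻¹) T
    simp only [Icc.coe_one] at hT
    linarith

theorem range_concatSeqLimit_subset :
    range (concatSeqLimit c σ z) ⊆ insert z (⋃ t, range (σ t)) := by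
  rintro _ ⟨s, rfl⟩
  by_cases h : ∃ T : ℕ, (s : ℝ) ≤ 1 - 2⁻¹ ^ T
  · refine Or.inr (range_concatSeq_subset (Nat.find h) c σ ?_)
    rw [← extend_range]
    exact ⟨s, (concatSeqLimit_eq (Nat.find_spec h)).symm⟩
  · exact Or.inl (dif_neg h)

theorem continuous_concatSeqLimit (hσ : Tendsto (fun t => range (σ t)) atTop (𝓝 z).smallSets) :
    Continuous (concatSeqLimit c σ z) := by
  have hτ : Tendsto (fun T : ℕ => 1 - (2⁻¹ : ℝ) ^ T) atTop (𝓝 1) := by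
    simpa using (tendsto_pow_atTop_nhds_zero_of_lt_one (by norm_num : (0 : ℝ) ≤ 2⁻¹)
      (by norm_num)).const_sub 1
  refine continuous_iff_continuousAt.2 fun s₀ => ?_
  rcases s₀.2.2.lt_or_eq with hs₀ | hs₀
  · obtain ⟨T, hT⟩ := (hτ.eventually_const_lt hs₀).exists
    refine ((concatSeq T c σ).continuous_extend.comp continuous_subtype_val).continuousAt.congr ?_
    filter_upwards [(isOpen_Iio.preimage continuous_subtype_val).mem_nhds hT] with s hs
    exact (concatSeqLimit_eq hs.le).symm
  obtain rfl : s₀ = 1 := Subtype.ext hs₀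
  rw [ContinuousAt, concatSeqLimit_one]
  intro N hN
  rw [mem_map]
  obtain ⟨T, hTN⟩ := eventually_atTop.1 (tendsto_smallSets_iff.1 hσ N hN)
  have h1 : 1 - (2⁻¹ : ℝ) ^ T < ((1 : unitInterval) : ℝ) := by simp
  filter_upwards [(isOpen_Ioi.preimage continuous_subtype_val).mem_nhds h1] with s hs
  change concatSeqLimit c σ z s ∈ N
  rcases s.2.2.lt_or_eq with h | h
  · obtain ⟨T', hTT', hsT'⟩ := ((eventually_ge_atTop T).and (hτ.eventually_const_lt h)).exists
    obtain ⟨t, ht, hmem⟩ := exists_mem_range_of_concatSeq_extend hTT' c σ hs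
    rw [concatSeqLimit_eq hsT'.le]
    exact hTN t ht hmem
  · rw [show s = 1 from Subtype.ext h, concatSeqLimit_one]
    exact mem_of_mem_nhds hN

theorem exists_path_of_tendsto_smallSets (σ : ∀ t, Path (c t) (c (t + 1)))
    (hσ : Tendsto (fun t => range (σ t)) atTop (𝓝 z).smallSets) :
    ∃ γ : Path (c 0) z, range γ ⊆ insert z (⋃ t, range (σ t)) := by
  refine ⟨⟨⟨concatSeqLimit c σ z, continuous_concatSeqLimit hσ⟩, ?_, concatSeqLimit_one⟩,
    range_concatSeqLimit_subset⟩
  simpa [concatSeq] using concatSeqLimit_eq (c := c) (σ := σ) (z := z) (s := 0) (T := 0) (by simp)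

end Path

theorem finite_and_ncard_inter_le_of_subset_union {X : Type*} {R Ω E : Set X} {P : Finset X}
    (hΩE : Disjoint Ω E) (hR : R ⊆ Ω ∪ ↑P) : (R ∩ E).Finite ∧ (R ∩ E).ncard ≤ P.card := by
  have hRE : R ∩ E ⊆ P := fun p hp => (hR hp.1).resolve_left fun h => hΩE.ne_of_mem h hp.2 rfl
  exact ⟨P.finite_toSet.subset hRE,
    (ncard_le_ncard hRE P.finite_toSet).trans_eq (ncard_coe_finset P)⟩

section Components

variable {X : Type*} [TopologicalSpace X]

theorem IsOpen.exists_path_of_mem_connectedComponentIn [LocallyPathConnectedSpace X] {O : Set X}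
    (hO : IsOpen O) {x y : X} (hy : y ∈ connectedComponentIn O x) :
    ∃ γ : Path x y, range γ ⊆ connectedComponentIn O x := by
  have hx : x ∈ O := connectedComponentIn_nonempty_iff.1 ⟨y, hy⟩
  have hpc : IsPathConnected (connectedComponentIn O x) :=
    hO.connectedComponentIn.isConnected_iff_isPathConnected.1
      (isConnected_connectedComponentIn_iff.2 hx)
  have hxy := hpc.joinedIn x (mem_connectedComponentIn hx) y hy
  exact ⟨hxy.somePath, range_subset_iff.2 hxy.somePath_mem⟩

theorem IsOpen.subset_closure_diff {G E : Set X} (hG : IsOpen G)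
    (hGE : Disjoint G (interior (closure E))) : G ⊆ closure (G \ E) := by
  intro p hp
  have hpE : p ∈ closure (closure E)ᶜ := by
    rw [closure_compl]
    exact fun h => hGE.ne_of_mem hp h rfl
  have hsub : G ∩ (closure E)ᶜ ⊆ G \ E := fun q hq => ⟨hq.1, fun hqE => hq.2 (subset_closure hqE)⟩
  exact closure_mono hsub (hG.inter_closure ⟨hp, hpE⟩)

theorem ncard_image_connectedComponentIn_le {O' O S : Set X} (hO : O' ⊆ O) (hS : S ⊆ O')
    {𝒞 : Finset (Set X)} (h𝒞 : ∀ x ∈ S, connectedComponentIn O' x ∈ 𝒞) :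
    (connectedComponentIn O '' S).Finite ∧ (connectedComponentIn O '' S).ncard ≤ 𝒞.card := by
  classical
  -- `F` sends a component of `O'` to the component of `O` containing it.
  let F : Set X → Set X := fun C => ⋃ x ∈ C, connectedComponentIn O x
  have hF : ∀ x ∈ O', F (connectedComponentIn O' x) = connectedComponentIn O x := fun x hx => by
    refine subset_antisymm (iUnion₂_subset fun y hy => ?_) ?_
    · rw [connectedComponentIn_eq (connectedComponentIn_mono x hO hy)]
    · exact subset_biUnion_of_mem (u := fun y => connectedComponentIn O y)
        (mem_connectedComponentIn hx)
  have hsub : connectedComponentIn O '' S ⊆ ↑(𝒞.image F) := by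
    rintro _ ⟨x, hx, rfl⟩
    rw [Finset.coe_image]
    exact ⟨_, h𝒞 x hx, hF x (hS hx)⟩
  refine ⟨(𝒞.image F).finite_toSet.subset hsub,
    (ncard_le_ncard hsub (Finset.finite_toSet _)).trans ?_⟩
  exact (ncard_coe_finset _).trans_le Finset.card_image_le

theorem pairwiseDisjoint_image_connectedComponentIn (F S : Set X) :
    (connectedComponentIn F '' S).PairwiseDisjoint id := by
  rintro _ ⟨p, -, rfl⟩ _ ⟨q, -, rfl⟩ hne
  exact disjoint_left.2 fun r hrp hrq =>
    hne ((connectedComponentIn_eq hrp).trans (connectedComponentIn_eq hrq).symm)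

/-- For `Ω = D \ E`, this is "`D` is finitely connected at `z ∈ E`". -/
def FinitelyConnectedAt (Ω : Set X) (z : X) : Prop :=
  ∀ U ∈ 𝓝 z, ∃ W ∈ 𝓝 z, W ⊆ U ∧ (connectedComponentIn (Ω ∩ W) '' (Ω ∩ W)).Finite

variable {Ω : Set X} {z : X}

theorem FinitelyConnectedAt.exists_mem_closure_connectedComponentIn (hz : FinitelyConnectedAt Ω z)
    {M U : Set X} (hMΩ : M ⊆ Ω) (hzM : z ∈ closure M) (hU : U ∈ 𝓝 z) :
    ∃ W ∈ 𝓝 z, W ⊆ U ∧ ∃ x ∈ M ∩ W, z ∈ closure (connectedComponentIn (Ω ∩ W) x) := by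
  obtain ⟨W, hW, hWU, hfin⟩ := hz U hU
  have hzMW : z ∈ closure (M ∩ W) := mem_closure_iff_nhds.2 fun N hN => by
    obtain ⟨y, hyN, hyM⟩ := mem_closure_iff_nhds.1 hzM (N ∩ W) (inter_mem hN hW)
    exact ⟨y, hyN.1, hyM, hyN.2⟩
  have hcover : M ∩ W ⊆ ⋃₀ (connectedComponentIn (Ω ∩ W) '' (M ∩ W)) := fun x hx =>
    mem_sUnion_of_mem (mem_connectedComponentIn (F := Ω ∩ W) ⟨hMΩ hx.1, hx.2⟩)
      (mem_image_of_mem _ hx)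
  have hfin' := hfin.subset (image_mono (inter_subset_inter_left W hMΩ))
  have := closure_mono hcover hzMW
  rw [hfin'.closure_sUnion, mem_iUnion₂] at this
  obtain ⟨_, ⟨x, hx, rfl⟩, hzx⟩ := this
  exact ⟨W, hW, hWU, x, hx, hzx⟩

theorem FinitelyConnectedAt.exists_seq_mem_connectedComponentIn (hz : FinitelyConnectedAt Ω z)
    {B : ℕ → Set X} (hB : ∀ t, B t ∈ 𝓝 z) {U : Set X} (hU : U ∈ 𝓝 z) {p : X}
    (hzp : z ∈ closure (connectedComponentIn (Ω ∩ U) p)) :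
    ∃ (W : ℕ → Set X) (x : ℕ → X), W 0 = U ∧ x 0 = p ∧
      ∀ t, W (t + 1) ⊆ interior (W t) ∩ B t ∧ x (t + 1) ∈ connectedComponentIn (Ω ∩ W t) (x t) := by
  let Good : Set X × X → Prop := fun q =>
    q.1 ∈ 𝓝 z ∧ z ∈ closure (connectedComponentIn (Ω ∩ q.1) q.2)
  have step : ∀ (t : ℕ) (q : Set X × X), Good q → ∃ q' : Set X × X, Good q' ∧
      q'.1 ⊆ interior q.1 ∩ B t ∧ q'.2 ∈ connectedComponentIn (Ω ∩ q.1) q.2 := by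
    rintro t ⟨W, x⟩ ⟨hW, hzx⟩
    obtain ⟨W', hW', hW'W, x', hx', hzx'⟩ := hz.exists_mem_closure_connectedComponentIn
      ((connectedComponentIn_subset _ _).trans inter_subset_left) hzx
      (inter_mem (interior_mem_nhds.2 hW) (hB t))
    exact ⟨(W', x'), ⟨hW', hzx'⟩, hW'W, hx'.1⟩
  choose! next hnext using step
  let q : ℕ → Set X × X := fun t => Nat.rec (U, p) next t
  have hgood : ∀ t, Good (q t) := fun t => Nat.rec ⟨hU, hzp⟩ (fun t ih => (hnext t _ ih).1) t
  exact ⟨fun t => (q t).1, fun t => (q t).2, rfl, rfl, fun t => (hnext t _ (hgood t)).2⟩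

variable [FirstCountableTopology X] [LocallyPathConnectedSpace X]

theorem FinitelyConnectedAt.exists_path_of_mem_closure (hΩ : IsOpen Ω)
    (hz : FinitelyConnectedAt Ω z) {U : Set X} (hU : IsOpen U) (hzU : z ∈ U) {p : X}
    (hzp : z ∈ closure (connectedComponentIn (Ω ∩ U) p)) :
    ∃ γ : Path p z, range γ ⊆ insert z (connectedComponentIn (Ω ∩ U) p) := by
  obtain ⟨B, hB⟩ := (𝓝 z).exists_antitone_basis
  obtain ⟨W, x, rfl, rfl, hWx⟩ :=
    hz.exists_seq_mem_connectedComponentIn hB.mem (hU.mem_nhds hzU) hzp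
  -- The components `M t` are nested and shrink to `z`, so paths joining the consecutive points
  -- `x t` concatenate to a path ending at `z`.
  let M : ℕ → Set X := fun t => connectedComponentIn (Ω ∩ W t) (x t)
  have hM_eq : ∀ t, M t = connectedComponentIn (Ω ∩ W t) (x (t + 1)) := fun t =>
    connectedComponentIn_eq (hWx t).2
  have hM : ∀ t, M (t + 1) ⊆ M t := fun t => hM_eq t ▸ connectedComponentIn_mono _
    (inter_subset_inter_right Ω ((hWx t).1.trans (inter_subset_left.trans interior_subset)))
  have hσ : ∀ t, ∃ σ : Path (x (t + 1)) (x (t + 2)), range σ ⊆ M t := fun t => by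
    have hsub : Ω ∩ W (t + 1) ⊆ Ω ∩ interior (W t) :=
      inter_subset_inter_right Ω ((hWx t).1.trans inter_subset_left)
    obtain ⟨σ, hσ⟩ := (hΩ.inter isOpen_interior).exists_path_of_mem_connectedComponentIn
      (connectedComponentIn_mono _ hsub (hWx (t + 1)).2)
    exact ⟨σ, hσ.trans (hM_eq t ▸ connectedComponentIn_mono _
      (inter_subset_inter_right Ω interior_subset))⟩
  choose σ hσ using hσ
  have hσz : Tendsto (fun t => range (σ t)) atTop (𝓝 z).smallSets := by
    refine (tendsto_add_atTop_iff_nat 1).1 (hB.tendsto_smallSets.smallSets_mono ?_)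
    refine Eventually.of_forall fun t => (hσ (t + 1)).trans ?_
    exact (connectedComponentIn_subset _ _).trans (inter_subset_right.trans
      ((hWx t).1.trans inter_subset_right))
  obtain ⟨γ, hγ⟩ := Path.exists_path_of_tendsto_smallSets σ hσz
  obtain ⟨δ, hδ⟩ := (hΩ.inter hU).exists_path_of_mem_connectedComponentIn (hWx 0).2
  refine ⟨δ.trans γ, ?_⟩
  rw [Path.trans_range]
  refine union_subset (hδ.trans (subset_insert _ _)) (hγ.trans (insert_subset_insert ?_))
  exact iUnion_subset fun t => (hσ t).trans (antitone_nat_of_succ_le hM (Nat.zero_le t))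

end Components

section TouchGraph

open SimpleGraph

variable {X : Type*} [TopologicalSpace X]

def touchGraph (𝒦 : Set (Set X)) (Z : Set X) : SimpleGraph 𝒦 where
  Adj K L := K ≠ L ∧ (Z ∩ closure K.1 ∩ closure L.1).Nonempty
  symm := ⟨fun _ _ ⟨hne, z, ⟨hz, hK⟩, hL⟩ => ⟨hne.symm, z, ⟨hz, hL⟩, hK⟩⟩
  loopless := ⟨fun _ h => h.1 rfl⟩

theorem touchGraph_adj {𝒦 : Set (Set X)} {Z : Set X} {K L : 𝒦} :
    (touchGraph 𝒦 Z).Adj K L ↔ K ≠ L ∧ (Z ∩ closure K.1 ∩ closure L.1).Nonempty :=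
  Iff.rfl

theorem touchGraph_reachable {𝒦 : Set (Set X)} (h𝒦 : 𝒦.Finite) (hopen : ∀ K ∈ 𝒦, IsOpen K)
    (hdisj : 𝒦.PairwiseDisjoint id) {Z T : Set X} (hT : IsPreconnected T)
    (hTZ : T ⊆ ⋃₀ 𝒦 ∪ Z) (hTcl : T ⊆ closure (⋃₀ 𝒦)) {K L : 𝒦} (hK : (K.1 ∩ T).Nonempty)
    (hL : (L.1 ∩ T).Nonempty) : (touchGraph 𝒦 Z).Reachable K L := by
  by_contra hKL
  -- Then the closures of the union of the members reachable from `K` and of the union of the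
  -- others would split `T`.
  have : Finite 𝒦 := h𝒦.to_subtype
  let R : Set 𝒦 := {K' | (touchGraph 𝒦 Z).Reachable K K'}
  let A := ⋃ K' ∈ R, K'.1
  let B := ⋃ K' ∈ Rᶜ, K'.1
  have hcover : T ⊆ closure A ∪ closure B := by
    rw [← closure_union]
    refine hTcl.trans (closure_mono ?_)
    rintro p ⟨K', hK', hp⟩
    by_cases h : (⟨K', hK'⟩ : 𝒦) ∈ R
    · exact Or.inl (mem_biUnion h hp)
    · exact Or.inr (mem_biUnion h hp)
  obtain ⟨p, hpT, hpA, hpB⟩ := isPreconnected_closed_iff.1 hT _ _ isClosed_closure isClosed_closure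
    hcover (hK.mono fun p hp => ⟨hp.2, subset_closure (mem_biUnion (Reachable.refl K) hp.1)⟩)
    (hL.mono fun p hp => ⟨hp.2, subset_closure (mem_biUnion hKL hp.1)⟩)
  rw [(toFinite R).closure_biUnion] at hpA
  rw [(toFinite Rᶜ).closure_biUnion] at hpB
  obtain ⟨Ka, hKa, hpKa⟩ := mem_iUnion₂.1 hpA
  obtain ⟨Kb, hKb, hpKb⟩ := mem_iUnion₂.1 hpB
  have hne : Ka ≠ Kb := fun h => hKb (h ▸ hKa)
  rcases hTZ hpT with ⟨K'', hK'', hpK''⟩ | hpZ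
  · have key : ∀ K' : 𝒦, p ∈ closure K'.1 → K'.1 = K'' := fun K' hp' => by
      obtain ⟨r, hrK'', hrK'⟩ := mem_closure_iff.1 hp' K'' (hopen K'' hK'') hpK''
      exact hdisj.elim K'.2 hK'' (not_disjoint_iff.2 ⟨r, hrK', hrK''⟩)
    exact hne (Subtype.ext ((key Ka hpKa).trans (key Kb hpKb).symm))
  · exact hKb (hKa.trans (touchGraph_adj.2 ⟨hne, p, ⟨hpZ, hpKa⟩, hpKb⟩).reachable)

variable [FirstCountableTopology X] [LocallyPathConnectedSpace X] {Ω U : Set X}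

theorem FinitelyConnectedAt.exists_path_through {z : X} (hz : FinitelyConnectedAt Ω z)
    (hΩ : IsOpen Ω) (hU : IsOpen U) (hzU : z ∈ U) {p q : X}
    (hzp : z ∈ closure (connectedComponentIn (Ω ∩ U) p))
    (hzq : z ∈ closure (connectedComponentIn (Ω ∩ U) q)) :
    ∃ γ : Path p q, range γ ⊆ insert z (Ω ∩ U) := by
  obtain ⟨γp, hγp⟩ := hz.exists_path_of_mem_closure hΩ hU hzU hzp
  obtain ⟨γq, hγq⟩ := hz.exists_path_of_mem_closure hΩ hU hzU hzq
  refine ⟨γp.trans γq.symm, ?_⟩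
  rw [Path.trans_range, Path.symm_range]
  exact union_subset (hγp.trans (insert_subset_insert (connectedComponentIn_subset _ _)))
    (hγq.trans (insert_subset_insert (connectedComponentIn_subset _ _)))

theorem exists_path_of_walk_touchGraph (hΩ : IsOpen Ω) (hU : IsOpen U) {𝒦 : Set (Set X)}
    (h𝒦 : 𝒦 ⊆ connectedComponentIn (Ω ∩ U) '' (Ω ∩ U)) {Z : Set X}
    (hZ : ∀ z ∈ Z, z ∈ U ∧ FinitelyConnectedAt Ω z) {K L : 𝒦} (w : (touchGraph 𝒦 Z).Walk K L)
    {p q : X} (hp : p ∈ K.1) (hq : q ∈ L.1) :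
    ∃ γ : Path p q, ∃ P : Finset X, ↑P ⊆ Z ∧ P.card ≤ w.length ∧ range γ ⊆ Ω ∩ U ∪ ↑P := by
  classical
  have hcomp : ∀ K ∈ 𝒦, ∀ p ∈ K, K = connectedComponentIn (Ω ∩ U) p := by
    rintro _ hK p hp
    obtain ⟨p₀, -, rfl⟩ := h𝒦 hK
    exact connectedComponentIn_eq hp
  induction w generalizing p with
  | @nil K =>
    rw [hcomp _ K.2 p hp] at hq
    obtain ⟨γ, hγ⟩ := (hΩ.inter hU).exists_path_of_mem_connectedComponentIn hq
    exact ⟨γ, ∅, by simp, by simp,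
      hγ.trans ((connectedComponentIn_subset _ _).trans subset_union_left)⟩
  | @cons K K' L hadj w ih =>
    obtain ⟨-, z, ⟨hzZ, hzK⟩, hzK'⟩ := touchGraph_adj.1 hadj
    obtain ⟨p', hp'⟩ : K'.1.Nonempty := by
      obtain ⟨p₀, hp₀, hK'⟩ := h𝒦 K'.2
      exact ⟨p₀, hK' ▸ mem_connectedComponentIn hp₀⟩
    obtain ⟨γ', P, hPZ, hPw, hγ'⟩ := ih hp' hq
    obtain ⟨δ, hδ⟩ := (hZ z hzZ).2.exists_path_through hΩ hU (hZ z hzZ).1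
      (hcomp _ K.2 p hp ▸ hzK) (hcomp _ K'.2 p' hp' ▸ hzK')
    refine ⟨δ.trans γ', insert z P, ?_, ?_, ?_⟩
    · rw [Finset.coe_insert]
      exact insert_subset hzZ hPZ
    · rw [SimpleGraph.Walk.length_cons]
      exact (Finset.card_insert_le z P).trans (by omega)
    · rw [Path.trans_range, Finset.coe_insert]
      refine union_subset (hδ.trans ?_) (hγ'.trans (union_subset_union_right _ (subset_insert _ _)))
      exact insert_subset (Or.inr (mem_insert z _)) subset_union_left

theorem exists_path_of_reachable_touchGraph (hΩ : IsOpen Ω) (hU : IsOpen U) {𝒦 : Set (Set X)}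
    (h𝒦 : 𝒦 ⊆ connectedComponentIn (Ω ∩ U) '' (Ω ∩ U)) (h𝒦fin : 𝒦.Finite) {Z : Set X}
    (hZ : ∀ z ∈ Z, z ∈ U ∧ FinitelyConnectedAt Ω z) {K L : 𝒦}
    (hKL : (touchGraph 𝒦 Z).Reachable K L) {p q : X} (hp : p ∈ K.1) (hq : q ∈ L.1) :
    ∃ γ : Path p q, ∃ P : Finset X, ↑P ⊆ Z ∧ P.card < 𝒦.ncard ∧ range γ ⊆ Ω ∩ U ∪ ↑P := by
  have := h𝒦fin.fintype
  obtain ⟨w⟩ := hKL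
  obtain ⟨γ, P, hPZ, hPw, hγ⟩ := exists_path_of_walk_touchGraph hΩ hU h𝒦 hZ w.bypass hp hq
  have hlen := w.bypass_isPath.length_lt
  rw [← Nat.card_coe_set_eq, Nat.card_eq_fintype_card]
  exact ⟨γ, P, hPZ, hPw.trans_lt hlen, hγ⟩

end TouchGraph

theorem eventually_exists_path_ncard_inter_le {X : Type*} [TopologicalSpace X]
    [FirstCountableTopology X] [LocallyPathConnectedSpace X] {D E : Set X} (hD : IsOpen D)
    (hDE : IsOpen (D \ E)) (hED : E ⊆ D) (hE : interior (closure E) ∩ D = ∅)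
    (hfc : ∀ z ∈ E, FinitelyConnectedAt (D \ E) z) {x₀ : X} {m : ℕ}
    (hcount : ∀ U ∈ 𝓝 x₀, ∃ V ∈ 𝓝 x₀, V ⊆ U ∧ ∃ 𝒞 : Finset (Set X), 𝒞.card ≤ m ∧
      ∀ x ∈ (V ∩ D) \ E, connectedComponentIn ((V ∩ D) \ E) x ∈ 𝒞)
    (hconn : ∀ U ∈ 𝓝 x₀, ∃ V ∈ 𝓝 x₀, V ⊆ U ∧ IsPreconnected (V ∩ D))
    {x y : ℕ → X} (hx : ∀ k, x k ∈ D \ E) (hy : ∀ k, y k ∈ D \ E)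
    (hxlim : Tendsto x atTop (𝓝 x₀)) (hylim : Tendsto y atTop (𝓝 x₀))
    {U : Set X} (hU : IsOpen U) (hx₀U : x₀ ∈ U) :
    ∀ᶠ k in atTop, ∃ γ : Path (x k) (y k), range γ ⊆ U ∩ D ∧ (range γ ∩ E).Finite ∧
      (range γ ∩ E).ncard ≤ m - 1 := by
  obtain ⟨V, hV, hVU, 𝒞, h𝒞m, h𝒞⟩ := hcount U (hU.mem_nhds hx₀U)
  set Ω := D \ E
  set S := Ω ∩ interior V
  set 𝒦 := connectedComponentIn (Ω ∩ U) '' S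
  have hSV : S ⊆ (V ∩ D) \ E := fun p hp => ⟨⟨interior_subset hp.2, hp.1.1⟩, hp.1.2⟩
  have hSO : S ⊆ Ω ∩ U := fun p hp => ⟨hp.1, hVU (interior_subset hp.2)⟩
  obtain ⟨h𝒦fin, h𝒦m⟩ := ncard_image_connectedComponentIn_le (O := Ω ∩ U)
    (fun p hp => ⟨⟨hp.1.2, hp.2⟩, hVU hp.1.1⟩) hSV fun p hp => h𝒞 p (hSV hp)
  have hmem : ∀ p ∈ S, p ∈ ⋃₀ 𝒦 := fun p hp =>
    mem_sUnion_of_mem (mem_connectedComponentIn (hSO hp)) (mem_image_of_mem _ hp)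
  obtain ⟨V', hV', hV'V, hV'D⟩ := hconn (interior V) (interior_mem_nhds.2 hV)
  have hT : V' ∩ D ⊆ closure (⋃₀ 𝒦) := by
    have hdisj : Disjoint (interior V ∩ D) (interior (closure E)) :=
      (disjoint_iff_inter_eq_empty.2 hE).symm.mono_left inter_subset_right
    refine (inter_subset_inter_left D hV'V).trans ((isOpen_interior.inter hD).subset_closure_diff
      hdisj |>.trans (closure_mono fun p hp => hmem p ⟨⟨hp.1.2, hp.2⟩, hp.1.1⟩))
  have hTZ : V' ∩ D ⊆ ⋃₀ 𝒦 ∪ E ∩ U := fun p hp => by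
    by_cases hpE : p ∈ E
    · exact Or.inr ⟨hpE, hVU (interior_subset (hV'V hp.1))⟩
    · exact Or.inl (hmem p ⟨⟨hp.2, hpE⟩, hV'V hp.1⟩)
  filter_upwards [hxlim.eventually hV', hylim.eventually hV'] with k hxk hyk
  have hxS : x k ∈ S := ⟨hx k, hV'V hxk⟩
  have hyS : y k ∈ S := ⟨hy k, hV'V hyk⟩
  have hreach := touchGraph_reachable h𝒦fin
    (by rintro _ ⟨p, -, rfl⟩; exact (hDE.inter hU).connectedComponentIn)
    (pairwiseDisjoint_image_connectedComponentIn _ _) hV'D hTZ hT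
    (K := ⟨_, mem_image_of_mem _ hxS⟩) (L := ⟨_, mem_image_of_mem _ hyS⟩)
    ⟨x k, mem_connectedComponentIn (hSO hxS), hxk, (hx k).1⟩
    ⟨y k, mem_connectedComponentIn (hSO hyS), hyk, (hy k).1⟩
  obtain ⟨γ, P, hPZ, hPm, hγ⟩ := exists_path_of_reachable_touchGraph hDE hU (image_mono hSO)
    h𝒦fin (fun z hz => ⟨hz.2, hfc z hz.1⟩) hreach (mem_connectedComponentIn (hSO hxS))
    (mem_connectedComponentIn (hSO hyS))
  obtain ⟨hfin, hcard⟩ :=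
    finite_and_ncard_inter_le_of_subset_union (disjoint_sdiff_left.mono_left inter_subset_left) hγ
  refine ⟨γ, hγ.trans (union_subset (fun p hp => ⟨hp.2, hp.1.1⟩) ?_), hfin, by omega⟩
  exact hPZ.trans fun p hp => ⟨hp.2, hED hp.1⟩

theorem stmt0_general (n : ℕ) (D : Set (EuclideanSpace ℝ (Fin n)))
    (hD_open : IsOpen D)
    (x₀ : EuclideanSpace ℝ (Fin n))
    (E : Set (EuclideanSpace ℝ (Fin n))) (hED : E ⊆ D)
    (hE_closed : ∃ F : Set (EuclideanSpace ℝ (Fin n)), IsClosed F ∧ E = F ∩ D)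
    (hE_nd : interior (closure E) ∩ D = ∅)
    (hE_fc : ∀ z₀ ∈ E, ∀ U ∈ 𝓝 z₀, ∃ V ∈ 𝓝 z₀, V ⊆ U ∧
      {C : Set (EuclideanSpace ℝ (Fin n)) |
        ∃ x ∈ (D ∩ V) \ E, C = connectedComponentIn ((D ∩ V) \ E) x}.Finite)
    (m : ℕ)
    (hnbhd : ∀ U ∈ 𝓝 x₀, ∃ V ∈ 𝓝 x₀, V ⊆ U ∧ IsConnected (V ∩ D) ∧
      ∃ 𝒞 : Finset (Set (EuclideanSpace ℝ (Fin n))), 𝒞.card ≤ m ∧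
        ∀ x ∈ (V ∩ D) \ E, connectedComponentIn ((V ∩ D) \ E) x ∈ 𝒞)
    (x y : ℕ → EuclideanSpace ℝ (Fin n))
    (hx : ∀ k, x k ∈ D \ E) (hy : ∀ k, y k ∈ D \ E)
    (hxlim : Tendsto x atTop (𝓝 x₀)) (hylim : Tendsto y atTop (𝓝 x₀)) :
    ∃ k : ℕ → ℕ, StrictMono k ∧
      ∃ V : ℕ → Set (EuclideanSpace ℝ (Fin n)),
        ∀ l : ℕ, IsOpen (V l) ∧ x₀ ∈ V l ∧ V l ⊆ ball x₀ ((2 : ℝ) ^ (-(l : ℤ))) ∧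
          x (k l) ∈ V l ∩ D ∧ y (k l) ∈ V l ∩ D ∧
          ∃ γ : Path (x (k l)) (y (k l)), range γ ⊆ V l ∩ D ∧
            (range γ ∩ E).Finite ∧ (range γ ∩ E).ncard ≤ m - 1 := by
  have hDE : IsOpen (D \ E) := by
    obtain ⟨F, hF, rfl⟩ := hE_closed
    rw [sdiff_inter_self_eq_sdiff]
    exact hD_open.sdiff hF
  have hfc : ∀ z ∈ E, FinitelyConnectedAt (D \ E) z := fun z hz U hU => by
    obtain ⟨W, hW, hWU, hfin⟩ := hE_fc z hz U hU
    refine ⟨W, hW, hWU, hfin.subset ?_⟩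
    rintro _ ⟨p, hp, rfl⟩
    exact ⟨p, inter_sdiff_right_comm ▸ hp, by rw [inter_sdiff_right_comm]⟩
  have hball : ∀ l : ℕ, (0 : ℝ) < 2 ^ (-(l : ℤ)) := fun l => by positivity
  obtain ⟨k, hk, hγ⟩ := extraction_forall_of_eventually fun l =>
    eventually_exists_path_ncard_inter_le hD_open hDE hED hE_nd hfc
    (fun U hU => (hnbhd U hU).imp fun _ h => ⟨h.1, h.2.1, h.2.2.2⟩)
    (fun U hU => (hnbhd U hU).imp fun _ h => ⟨h.1, h.2.1, h.2.2.1.isPreconnected⟩)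
    hx hy hxlim hylim isOpen_ball (mem_ball_self (hball l))
  refine ⟨k, hk, fun l => ball x₀ (2 ^ (-(l : ℤ))), fun l => ?_⟩
  obtain ⟨γ, hγD, hγE⟩ := hγ l
  exact ⟨isOpen_ball, mem_ball_self (hball l), subset_rfl, hγD γ.source_mem_range,
    hγD γ.target_mem_range, γ, hγD, hγE⟩

/-- **Lemma on paths.**
Let `D` be a domain in `ℝⁿ`, `n ≥ 2`, `x₀ ∈ ∂D`, `E ⊆ D` relatively closed and nowhere
dense in `D`, `D` finitely connected on `E`.  Assume there is `m ≥ 1` such that every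
neighborhood `U` of `x₀` contains a neighborhood `V` of `x₀` with `V ∩ D` connected and
`(V ∩ D) \ E` having at most `m` components.  If `x_k, y_k ∈ D \ E` converge to `x₀`,
then there are indices `k_l` (strictly increasing) and open neighborhoods
`V_l ⊆ B(x₀, 2^{-l})` of `x₀` such that `x_{k_l}, y_{k_l} ∈ V_l ∩ D` can be joined by a
path in `V_l ∩ D` meeting `E` in at most `m - 1` points. -/
theorem stmt0 (n : ℕ) (hn : 2 ≤ n)
    (D : Set (EuclideanSpace ℝ (Fin n)))
    (hD_ne : D.Nonempty) (hD_open : IsOpen D) (hD_conn : IsConnected D)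
    (x₀ : EuclideanSpace ℝ (Fin n)) (hx₀ : x₀ ∈ frontier D)
    (E : Set (EuclideanSpace ℝ (Fin n))) (hED : E ⊆ D)
    (hE_closed : ∃ F : Set (EuclideanSpace ℝ (Fin n)), IsClosed F ∧ E = F ∩ D)
    (hE_nd : interior (closure E) ∩ D = ∅)
    (hE_fc : ∀ z₀ ∈ E, ∀ U ∈ 𝓝 z₀, ∃ V ∈ 𝓝 z₀, V ⊆ U ∧
      {C : Set (EuclideanSpace ℝ (Fin n)) |
        ∃ x ∈ (D ∩ V) \ E, C = connectedComponentIn ((D ∩ V) \ E) x}.Finite)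
    (m : ℕ) (hm : 1 ≤ m)
    (hnbhd : ∀ U ∈ 𝓝 x₀, ∃ V ∈ 𝓝 x₀, V ⊆ U ∧ IsConnected (V ∩ D) ∧
      ∃ 𝒞 : Finset (Set (EuclideanSpace ℝ (Fin n))), 𝒞.card ≤ m ∧
        ∀ x ∈ (V ∩ D) \ E, connectedComponentIn ((V ∩ D) \ E) x ∈ 𝒞)
    (x y : ℕ → EuclideanSpace ℝ (Fin n))
    (hx : ∀ k, x k ∈ D \ E) (hy : ∀ k, y k ∈ D \ E)
    (hxlim : Tendsto x atTop (𝓝 x₀)) (hylim : Tendsto y atTop (𝓝 x₀)) :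
    ∃ k : ℕ → ℕ, StrictMono k ∧
      ∃ V : ℕ → Set (EuclideanSpace ℝ (Fin n)),
        ∀ l : ℕ, IsOpen (V l) ∧ x₀ ∈ V l ∧ V l ⊆ ball x₀ ((2 : ℝ) ^ (-(l : ℤ))) ∧
          x (k l) ∈ V l ∩ D ∧ y (k l) ∈ V l ∩ D ∧
          ∃ γ : Path (x (k l)) (y (k l)), range γ ⊆ V l ∩ D ∧
            (range γ ∩ E).Finite ∧ (range γ ∩ E).ncard ≤ m - 1 :=
  stmt0_general n D hD_open x₀ E hED hE_closed hE_nd hE_fc m hnbhd x y hx hy hxlim hylim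
end

section
/- Let U ⊂ ℝⁿ, n ≥ 2, be open, let E ⊂ U be relatively closed in U and nowhere dense in U, and assume U \ E has only finitely many connected components. Let K₁ be a connected component of U \ E and let z₁ ∈ E be such that there is a sequence w_l ∈ U \ closure(K₁) with w_l → z₁ as l → ∞. Then there exists a connected component K₂ of U \ E with K₂ ≠ K₁ such that z₁ ∈ closure(K₂) \ K₂, i.e. z₁ lies on the frontier of K₂. -/
open Set Filter Topology Metric

/-- Let `U ⊆ ℝⁿ`, `n ≥ 2`, be open, `E ⊆ U` relatively closed and
nowhere dense in `U`, with `U \ E` having only finitely many connected components.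
Let `K₁` be a component of `U \ E` and `z₁ ∈ E` a limit of a sequence
`w_l ∈ U \ closure K₁`.  Then there is a component `K₂ ≠ K₁` of `U \ E` with
`z₁ ∈ closure K₂ \ K₂`. -/
theorem stmt2 (n : ℕ) (hn : 2 ≤ n)
    (U : Set (EuclideanSpace ℝ (Fin n))) (hU : IsOpen U)
    (E : Set (EuclideanSpace ℝ (Fin n)))
    (hE : ∃ F : Set (EuclideanSpace ℝ (Fin n)), IsClosed F ∧ E = F ∩ U)
    (hE_nd : interior (closure E) ∩ U = ∅)
    (hfin : {C : Set (EuclideanSpace ℝ (Fin n)) |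
      ∃ x ∈ U \ E, C = connectedComponentIn (U \ E) x}.Finite)
    (K₁ : Set (EuclideanSpace ℝ (Fin n)))
    (hK₁ : ∃ x ∈ U \ E, K₁ = connectedComponentIn (U \ E) x)
    (z₁ : EuclideanSpace ℝ (Fin n)) (hz₁ : z₁ ∈ E)
    (w : ℕ → EuclideanSpace ℝ (Fin n)) (hw : ∀ l, w l ∈ U \ closure K₁)
    (hw_lim : Tendsto w atTop (𝓝 z₁)) :
    ∃ K₂ : Set (EuclideanSpace ℝ (Fin n)),
      (∃ x ∈ U \ E, K₂ = connectedComponentIn (U \ E) x) ∧ K₂ ≠ K₁ ∧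
        z₁ ∈ closure K₂ \ K₂ := by
  -- Step 1: choose points x l ∈ U \ E, outside closure K₁, close to w l.
  have hx : ∀ l : ℕ, ∃ x, x ∈ U \ E ∧ x ∉ closure K₁ ∧ dist x (w l) < 1/(l+1) := by
    intro l
    obtain ⟨hw1, hw2⟩ := hw l
    have hopen : IsOpen (U ∩ (closure K₁)ᶜ) := hU.inter isClosed_closure.isOpen_compl
    obtain ⟨ε, hε, hball⟩ := Metric.isOpen_iff.1 hopen (w l) ⟨hw1, hw2⟩
    set δ : ℝ := min ε (1/(l+1)) with hδdef
    have hδ : 0 < δ := lt_min hε (by positivity)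
    have hnotsub : ¬ Metric.ball (w l) δ ⊆ closure E := by
      intro hsub
      have hwl : w l ∈ interior (closure E) ∩ U :=
        ⟨mem_interior.2 ⟨Metric.ball (w l) δ, hsub, Metric.isOpen_ball,
          Metric.mem_ball_self hδ⟩, hw1⟩
      rw [hE_nd] at hwl
      exact hwl
    rw [Set.not_subset] at hnotsub
    obtain ⟨x, hxball, hxE⟩ := hnotsub
    have hxU : x ∈ U ∩ (closure K₁)ᶜ :=
      hball (Metric.ball_subset_ball (min_le_left _ _) hxball)
    refine ⟨x, ⟨hxU.1, fun h => hxE (subset_closure h)⟩, hxU.2, ?_⟩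
    exact lt_of_lt_of_le (Metric.mem_ball.1 hxball) (min_le_right _ _)
  choose x hxUE hxK₁ hxdist using hx
  -- Step 2: x tends to z₁.
  have hx_lim : Tendsto x atTop (𝓝 z₁) := by
    rw [tendsto_iff_dist_tendsto_zero]
    have hle : ∀ l, dist (x l) z₁ ≤ 1/(l+1) + dist (w l) z₁ := fun l =>
      (dist_triangle (x l) (w l) z₁).trans (by linarith [(hxdist l).le])
    have h1 : Tendsto (fun l : ℕ => 1/(l+1 : ℝ) + dist (w l) z₁) atTop (𝓝 0) := by
      have := (tendsto_one_div_add_atTop_nhds_zero_nat).add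
        ((tendsto_iff_dist_tendsto_zero.1 hw_lim))
      simpa using this
    exact squeeze_zero (fun l => dist_nonneg) hle h1
  -- Step 3: pigeonhole on components.
  haveI : Finite ↥{C : Set (EuclideanSpace ℝ (Fin n)) |
      ∃ x ∈ U \ E, C = connectedComponentIn (U \ E) x} := hfin.to_subtype
  set S := {C : Set (EuclideanSpace ℝ (Fin n)) |
      ∃ x ∈ U \ E, C = connectedComponentIn (U \ E) x} with hS
  have hf : ∀ l, connectedComponentIn (U \ E) (x l) ∈ S := fun l =>
    ⟨x l, hxUE l, rfl⟩
  obtain ⟨C, hC⟩ := Finite.exists_infinite_fiber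
    (fun l : ℕ => (⟨connectedComponentIn (U \ E) (x l), hf l⟩ : S))
  rw [Set.infinite_coe_iff] at hC
  refine ⟨(C : Set _), ?_, ?_, ?_, ?_⟩
  · exact C.2
  · obtain ⟨l, hl⟩ := hC.nonempty
    have hxl : x l ∈ (C : Set _) := by
      have : connectedComponentIn (U \ E) (x l) = (C : Set _) := by
        simpa [Subtype.ext_iff] using hl
      rw [← this]
      exact mem_connectedComponentIn (hxUE l)
    intro hCK
    exact hxK₁ l (subset_closure (hCK ▸ hxl))
  · refine mem_closure_of_frequently_of_tendsto ?_ hx_lim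
    rw [frequently_atTop]
    intro N
    obtain ⟨l, hl, hlN⟩ := hC.exists_gt N
    have : connectedComponentIn (U \ E) (x l) = (C : Set _) := by
      simpa [Subtype.ext_iff] using hl
    exact ⟨l, hlN.le, this ▸ mem_connectedComponentIn (hxUE l)⟩
  · intro hz
    obtain ⟨y, hy, hCy⟩ := C.2
    have := hCy ▸ hz
    exact ((connectedComponentIn_subset (U \ E) y) this).2 hz₁
end

section
/- Let D ⊂ ℝⁿ, n ≥ 2, be open, let E ⊂ D be relatively closed in D, and assume D is finitely connected on E. Let V ⊂ ℝⁿ be open, let K be a connected component of (V ∩ D) \ E, and let z₀ ∈ V ∩ D ∩ E. Then for every neighborhood Ũ of z₀ there is a neighborhood Ṽ ⊂ Ũ of z₀ such that K ∩ Ṽ has only finitely many connected components. -/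
open Set Filter Topology Metric

/-- Let `D ⊆ ℝⁿ`, `n ≥ 2`, be open, `E ⊆ D` relatively closed in `D`,
and `D` finitely connected on `E`.  Let `V` be open, `K` a component of `(V ∩ D) \ E`,
and `z₀ ∈ V ∩ D ∩ E`.  Then every neighborhood `U'` of `z₀` contains a neighborhood
`V'` of `z₀` such that `K ∩ V'` has only finitely many connected components. -/
theorem stmt3 (n : ℕ) (hn : 2 ≤ n)
    (D : Set (EuclideanSpace ℝ (Fin n))) (hD : IsOpen D)
    (E : Set (EuclideanSpace ℝ (Fin n)))
    (hE : ∃ F : Set (EuclideanSpace ℝ (Fin n)), IsClosed F ∧ E = F ∩ D)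
    (hE_fc : ∀ z₀ ∈ E, ∀ U ∈ 𝓝 z₀, ∃ V ∈ 𝓝 z₀, V ⊆ U ∧
      {C : Set (EuclideanSpace ℝ (Fin n)) |
        ∃ x ∈ (D ∩ V) \ E, C = connectedComponentIn ((D ∩ V) \ E) x}.Finite)
    (V : Set (EuclideanSpace ℝ (Fin n))) (hV : IsOpen V)
    (K : Set (EuclideanSpace ℝ (Fin n)))
    (hK : ∃ x ∈ (V ∩ D) \ E, K = connectedComponentIn ((V ∩ D) \ E) x)
    (z₀ : EuclideanSpace ℝ (Fin n)) (hz₀ : z₀ ∈ V ∩ D ∩ E) :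
    ∀ U' ∈ 𝓝 z₀, ∃ V' ∈ 𝓝 z₀, V' ⊆ U' ∧
      {C : Set (EuclideanSpace ℝ (Fin n)) |
        ∃ x ∈ K ∩ V', C = connectedComponentIn (K ∩ V') x}.Finite := by
  intro U' hU'
  obtain ⟨x₀, hx₀, hKdef⟩ := hK
  -- z₀ ∈ E
  have hz₀E : z₀ ∈ E := hz₀.2
  have hz₀V : z₀ ∈ V := hz₀.1.1
  -- apply finite connectivity with U' ∩ V
  obtain ⟨V', hV'nhds, hV'sub, hfin⟩ :=
    hE_fc z₀ hz₀E (U' ∩ V) (inter_mem hU' (hV.mem_nhds hz₀V))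
  refine ⟨V', hV'nhds, fun x hx => (hV'sub hx).1, ?_⟩
  have hV'V : V' ⊆ V := fun x hx => (hV'sub hx).2
  set big : Set (EuclideanSpace ℝ (Fin n)) := (D ∩ V') \ E with hbig
  -- K ∩ V' ⊆ big
  have hKsub : K ⊆ (V ∩ D) \ E := by
    rw [hKdef]; exact connectedComponentIn_subset _ _
  have hKV'big : K ∩ V' ⊆ big := by
    rintro x ⟨hxK, hxV'⟩
    exact ⟨⟨(hKsub hxK).1.2, hxV'⟩, (hKsub hxK).2⟩
  -- key: for x ∈ K ∩ V', connectedComponentIn (K ∩ V') x = connectedComponentIn big x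
  have key : ∀ x ∈ K ∩ V',
      connectedComponentIn (K ∩ V') x = connectedComponentIn big x := by
    intro x hx
    apply Subset.antisymm (connectedComponentIn_mono x hKV'big)
    have hxbig : x ∈ big := hKV'big hx
    have hC1 : connectedComponentIn big x ⊆ (V ∩ D) \ E := by
      intro y hy
      have := connectedComponentIn_subset big x hy
      exact ⟨⟨hV'V this.1.2, this.1.1⟩, this.2⟩
    have hxK' : x ∈ K := hx.1
    have hKx : K = connectedComponentIn ((V ∩ D) \ E) x := by
      rw [hKdef] at hxK' ⊢
      exact (connectedComponentIn_eq hxK')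
    have hCK : connectedComponentIn big x ⊆ K := by
      rw [hKx]
      exact (isPreconnected_connectedComponentIn).subset_connectedComponentIn
        (mem_connectedComponentIn hxbig) hC1
    have hCV' : connectedComponentIn big x ⊆ V' := fun y hy =>
      (connectedComponentIn_subset big x hy).1.2
    exact (isPreconnected_connectedComponentIn).subset_connectedComponentIn
      (mem_connectedComponentIn hxbig)
      (subset_inter hCK hCV')
  apply hfin.subset
  rintro C ⟨x, hx, rfl⟩
  exact ⟨x, hKV'big hx, key x hx⟩
end

section
/- Let D = { z ∈ ℂ : |z − 1| < 1 } and f(z) = z⁴. Then the set f(D) \ f(∂D) = { z⁴ : z ∈ ℂ, |z − 1| < 1 } \ { (1 + exp(iθ))⁴ : θ ∈ ℝ } has exactly two connected components. -/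
/-!
The fourth roots of `z ^ 4` are `± z` and `± I * z`, and a point `z` of the disk `D = ball 1 1`
has `z ^ 4 ∈ f(∂D)` exactly when `z` lies on one of the circles `|z ∓ I| = 1` through `0` and
`1 ± I`. These cut `D` into the lens `D ∩ ball I 1`, its mirror image `D ∩ ball (-I) 1`, and
the curvilinear triangle with vertices `0, 1 + I, 1 - I`. Multiplication by `I` carries the
mirror lens onto the lens without changing fourth powers, so `f(D) \ f(∂D)` is the union of the
images of the lens and of the triangle. Both images are open (open mapping theorem) and
connected (the lens is convex, the triangle star-shaped about `1`), and they are disjoint, as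
one sees by testing the four fourth roots.
-/

open Set Complex Metric

section TwoComponents

variable {X : Type*} [TopologicalSpace X] {S A B : Set X}

theorem connectedComponentIn_eq_of_eq_union (hA : IsOpen A) (hB : IsOpen B)
    (hAB : Disjoint A B) (hS : S = A ∪ B) (hA' : IsPreconnected A) ⦃x : X⦄ (hx : x ∈ A) :
    connectedComponentIn S x = A := by
  subst hS
  refine Subset.antisymm ?_ (hA'.subset_connectedComponentIn hx subset_union_left)
  exact isPreconnected_connectedComponentIn.subset_left_of_subset_union hA hB hAB
    (connectedComponentIn_subset _ _) ⟨x, mem_connectedComponentIn (Or.inl hx), hx⟩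

theorem exists_pair_connectedComponentIn_of_eq_union (hS : S = A ∪ B) (hA : IsOpen A)
    (hB : IsOpen B) (hAB : Disjoint A B) (hA' : IsPreconnected A) (hB' : IsPreconnected B)
    (hAne : A.Nonempty) (hBne : B.Nonempty) :
    ∃ C₁ C₂ : Set X, C₁ ≠ C₂ ∧ (∃ x ∈ S, C₁ = connectedComponentIn S x) ∧
      (∃ x ∈ S, C₂ = connectedComponentIn S x) ∧
      ∀ C : Set X, (∃ x ∈ S, C = connectedComponentIn S x) → C = C₁ ∨ C = C₂ := by
  have hcompA := connectedComponentIn_eq_of_eq_union hA hB hAB hS hA'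
  have hcompB := connectedComponentIn_eq_of_eq_union hB hA hAB.symm (hS.trans (union_comm A B)) hB'
  obtain ⟨a, ha⟩ := hAne
  obtain ⟨b, hb⟩ := hBne
  subst hS
  refine ⟨A, B, ?_, ⟨a, Or.inl ha, (hcompA ha).symm⟩, ⟨b, Or.inr hb, (hcompB hb).symm⟩, ?_⟩
  · rintro rfl
    exact hAB.notMem_of_mem_left ha ha
  · rintro C ⟨x, hx | hx, rfl⟩
    exacts [Or.inl (hcompA hx), Or.inr (hcompB hx)]

end TwoComponents

namespace Complex

theorem pow_four_eq_pow_four_iff {ζ z : ℂ} :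
    ζ ^ 4 = z ^ 4 ↔ ζ = z ∨ ζ = -z ∨ ζ = I * z ∨ ζ = -(I * z) := by
  constructor
  · intro h
    have hsq : (ζ ^ 2) ^ 2 = (z ^ 2) ^ 2 := by rw [← pow_mul, ← pow_mul]; exact h
    rcases sq_eq_sq_iff_eq_or_eq_neg.1 hsq with h | h
    · rcases sq_eq_sq_iff_eq_or_eq_neg.1 h with h | h <;> simp only [h, true_or, or_true]
    · have h' : ζ ^ 2 = (I * z) ^ 2 := by rw [h, mul_pow, I_sq]; ring
      rcases sq_eq_sq_iff_eq_or_eq_neg.1 h' with h | h <;> simp only [h, true_or, or_true]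
  · rintro (rfl | rfl | rfl | rfl) <;> ring_nf <;> simp only [I_pow_four, one_mul]

theorem setOf_one_add_exp_pow_four :
    {w : ℂ | ∃ θ : ℝ, w = (1 + exp (θ * I)) ^ 4} = (· ^ 4) '' sphere 1 1 := by
  ext w
  constructor
  · rintro ⟨θ, rfl⟩
    exact ⟨1 + exp (θ * I), by simp [norm_exp_ofReal_mul_I], rfl⟩
  · rintro ⟨ζ, hζ, rfl⟩
    obtain ⟨θ, hθ⟩ := (norm_eq_one_iff _).1 (mem_sphere_iff_norm.1 hζ)
    exact ⟨θ, by rw [hθ]; ring⟩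

theorem mem_ball_one_one_iff {z : ℂ} : z ∈ ball (1 : ℂ) 1 ↔ normSq z < 2 * z.re := by
  rw [mem_ball, dist_eq, ← sq_lt_one_iff₀ (norm_nonneg _), ← normSq_eq_norm_sq, normSq_sub]
  simp only [map_one, mul_one]
  constructor <;> intro <;> linarith

theorem mem_ball_I_one_iff {z : ℂ} : z ∈ ball I 1 ↔ normSq z < 2 * z.im := by
  rw [mem_ball, dist_eq, ← sq_lt_one_iff₀ (norm_nonneg _), ← normSq_eq_norm_sq, normSq_sub]
  simp only [normSq_I, conj_I, mul_neg, neg_re, mul_re, I_re, mul_zero, I_im, mul_one, zero_sub,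
    neg_neg]
  constructor <;> intro <;> linarith

theorem mem_sphere_one_one_iff {z : ℂ} : z ∈ sphere (1 : ℂ) 1 ↔ normSq z = 2 * z.re := by
  rw [mem_sphere, dist_eq, ← pow_eq_one_iff_of_nonneg (norm_nonneg _) two_ne_zero,
    ← normSq_eq_norm_sq, normSq_sub]
  simp only [map_one, mul_one]
  constructor <;> intro <;> linarith

end Complex

namespace QuarticImageOfDisk

def lens : Set ℂ := ball 1 1 ∩ ball I 1

/-- `2 * |z.im| < normSq z` says that `z` lies outside both closed disks `closedBall (± I) 1`. -/
def triangle : Set ℂ := {z | 2 * |z.im| < normSq z ∧ normSq z < 2 * z.re}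

theorem isOpen_triangle : IsOpen triangle :=
  (isOpen_lt (by fun_prop) continuous_normSq).inter (isOpen_lt continuous_normSq (by fun_prop))

theorem one_mem_triangle : (1 : ℂ) ∈ triangle := by
  norm_num [triangle]

theorem starConvex_triangle : StarConvex ℝ 1 triangle := by
  rintro y ⟨hy₁, hy₂⟩ a b ha hb hab
  obtain rfl : a = 1 - b := by linarith
  simp only [triangle, mem_ofPred_eq, normSq_apply, add_re, add_im, smul_re, smul_im, one_re,
    one_im, smul_eq_mul, mul_one, mul_zero, zero_add] at hy₁ hy₂ ⊢
  rw [abs_mul, abs_of_nonneg hb]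
  set m := (y.re - 1) ^ 2 + y.im ^ 2
  have hm₀ : 0 ≤ m := by positivity
  have hm₁ : m < 1 := by nlinarith
  have hb₁ : b ^ 2 ≤ 1 := by nlinarith
  -- the point `p = 1 + b (y - 1)` has `normSq p = b normSq y + (1 - b)(1 - b m)`
  -- and `normSq p - 2 p.re + 1 = b ^ 2 m`
  constructor
  · rcases hb.eq_or_lt with rfl | hb₀
    · norm_num
    · nlinarith [mul_nonneg ha (by nlinarith : 0 ≤ 1 - b * m), mul_lt_mul_of_pos_left hy₁ hb₀]
  · nlinarith [mul_le_mul_of_nonneg_right hb₁ hm₀]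

theorem pow_four_mem_image_sphere_iff {z : ℂ} (hz : z ∈ ball (1 : ℂ) 1) :
    z ^ 4 ∈ (· ^ 4) '' sphere (1 : ℂ) 1 ↔ normSq z = 2 * |z.im| := by
  rw [mem_ball_one_one_iff] at hz
  have hz₀ := normSq_nonneg z
  constructor
  · rintro ⟨ζ, hζ, hζz⟩
    rw [mem_sphere_one_one_iff] at hζ
    rcases pow_four_eq_pow_four_iff.1 hζz with h | h | h | h <;> rw [h] at hζ
    · linarith
    · rw [normSq_neg, neg_re] at hζ
      linarith
    · rw [normSq_mul, normSq_I, one_mul, I_mul_re] at hζ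
      rw [abs_of_nonpos (by linarith)]
      linarith
    · rw [normSq_neg, normSq_mul, normSq_I, one_mul, neg_re, I_mul_re] at hζ
      rw [abs_of_nonneg (by linarith)]
      linarith
  · intro h
    rcases le_or_gt 0 z.im with him | him
    · refine ⟨-(I * z), ?_, pow_four_eq_pow_four_iff.2 (by simp only [or_true])⟩
      rw [mem_sphere_one_one_iff, normSq_neg, normSq_mul, normSq_I, one_mul, neg_re, I_mul_re]
      rw [abs_of_nonneg him] at h
      linarith
    · refine ⟨I * z, ?_, pow_four_eq_pow_four_iff.2 (by simp only [true_or, or_true])⟩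
      rw [mem_sphere_one_one_iff, normSq_mul, normSq_I, one_mul, I_mul_re]
      rw [abs_of_neg him] at h
      linarith

theorem image_ball_diff_image_sphere :
    (· ^ 4) '' ball (1 : ℂ) 1 \ (· ^ 4) '' sphere 1 1 = (· ^ 4) '' lens ∪ (· ^ 4) '' triangle := by
  ext w
  constructor
  · rintro ⟨⟨z, hz, rfl⟩, hw⟩
    have hne : normSq z ≠ 2 * |z.im| := fun h => hw ((pow_four_mem_image_sphere_iff hz).2 h)
    rw [mem_ball_one_one_iff] at hz
    rcases hne.lt_or_gt with hlt | hgt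
    · left
      rcases le_or_gt 0 z.im with him | him
      · rw [abs_of_nonneg him] at hlt
        exact ⟨z, ⟨mem_ball_one_one_iff.2 hz, mem_ball_I_one_iff.2 hlt⟩, rfl⟩
      · rw [abs_of_neg him] at hlt
        refine ⟨I * z, ⟨?_, ?_⟩, pow_four_eq_pow_four_iff.2 (by simp only [true_or, or_true])⟩
        · rw [mem_ball_one_one_iff, normSq_mul, normSq_I, one_mul, I_mul_re]
          linarith
        · rw [mem_ball_I_one_iff, normSq_mul, normSq_I, one_mul, I_mul_im]
          exact hz
    · exact Or.inr ⟨z, ⟨hgt, hz⟩, rfl⟩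
  · rintro (⟨z, ⟨hz, hzI⟩, rfl⟩ | ⟨z, ⟨hz₁, hz₂⟩, rfl⟩)
    · refine ⟨⟨z, hz, rfl⟩, fun h => ?_⟩
      rw [mem_ball_I_one_iff] at hzI
      have := (pow_four_mem_image_sphere_iff hz).1 h
      linarith [le_abs_self z.im]
    · have hz := mem_ball_one_one_iff.2 hz₂
      refine ⟨⟨z, hz, rfl⟩, fun h => ?_⟩
      have := (pow_four_mem_image_sphere_iff hz).1 h
      linarith

theorem disjoint_image_lens_triangle : Disjoint ((· ^ 4) '' lens) ((· ^ 4) '' triangle) := by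
  rw [disjoint_left]
  rintro _ ⟨z, ⟨hz, hzI⟩, rfl⟩ ⟨ζ, ⟨hζ₁, hζ₂⟩, hζz⟩
  rw [mem_ball_one_one_iff] at hz
  rw [mem_ball_I_one_iff] at hzI
  have hz₀ := normSq_nonneg z
  rcases pow_four_eq_pow_four_iff.1 hζz with h | h | h | h <;> rw [h] at hζ₁ hζ₂
  · linarith [le_abs_self z.im]
  all_goals
    simp only [normSq_neg, normSq_mul, normSq_I, one_mul, neg_re, neg_im, neg_neg, I_mul_re,
      I_mul_im, abs_neg] at hζ₁ hζ₂
    linarith [le_abs_self z.re]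

end QuarticImageOfDisk

open QuarticImageOfDisk in
/-- Let `D = {z : |z - 1| < 1}` and `f z = z⁴`.  Then
`f(D) \ f(∂D)` has exactly two connected components. -/
theorem stmt10 :
    ∃ C₁ C₂ : Set ℂ, C₁ ≠ C₂ ∧
      (∃ x ∈ ((fun z : ℂ => z ^ 4) '' Metric.ball (1 : ℂ) 1) \
          {w : ℂ | ∃ θ : ℝ, w = (1 + Complex.exp ((θ : ℂ) * Complex.I)) ^ 4},
        C₁ = connectedComponentIn (((fun z : ℂ => z ^ 4) '' Metric.ball (1 : ℂ) 1) \
          {w : ℂ | ∃ θ : ℝ, w = (1 + Complex.exp ((θ : ℂ) * Complex.I)) ^ 4}) x) ∧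
      (∃ x ∈ ((fun z : ℂ => z ^ 4) '' Metric.ball (1 : ℂ) 1) \
          {w : ℂ | ∃ θ : ℝ, w = (1 + Complex.exp ((θ : ℂ) * Complex.I)) ^ 4},
        C₂ = connectedComponentIn (((fun z : ℂ => z ^ 4) '' Metric.ball (1 : ℂ) 1) \
          {w : ℂ | ∃ θ : ℝ, w = (1 + Complex.exp ((θ : ℂ) * Complex.I)) ^ 4}) x) ∧
      (∀ C : Set ℂ,
        (∃ x ∈ ((fun z : ℂ => z ^ 4) '' Metric.ball (1 : ℂ) 1) \
            {w : ℂ | ∃ θ : ℝ, w = (1 + Complex.exp ((θ : ℂ) * Complex.I)) ^ 4},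
          C = connectedComponentIn (((fun z : ℂ => z ^ 4) '' Metric.ball (1 : ℂ) 1) \
            {w : ℂ | ∃ θ : ℝ, w = (1 + Complex.exp ((θ : ℂ) * Complex.I)) ^ 4}) x) →
        C = C₁ ∨ C = C₂) := by
  have hopen := (isOpenQuotientMap_pow 4).isOpenMap
  have hcont : Continuous fun z : ℂ => z ^ 4 := continuous_pow 4
  have hlens : ((1 + I) / 2 : ℂ) ∈ lens := by
    simp only [lens, mem_inter_iff, mem_ball_one_one_iff, mem_ball_I_one_iff]
    norm_num [normSq_apply]
  rw [setOf_one_add_exp_pow_four]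
  exact exists_pair_connectedComponentIn_of_eq_union image_ball_diff_image_sphere
    (hopen _ (isOpen_ball.inter isOpen_ball)) (hopen _ isOpen_triangle)
    disjoint_image_lens_triangle
    (((convex_ball _ _).inter (convex_ball _ _)).isPreconnected.image _ hcont.continuousOn)
    ((starConvex_triangle.isPathConnected one_mem_triangle).isConnected.isPreconnected.image _
      hcont.continuousOn)
    ⟨_, mem_image_of_mem _ hlens⟩ ⟨_, mem_image_of_mem _ one_mem_triangle⟩
end
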